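/- arXiv:0906.4963 — 3 statements merged into one kernel-verified Lean document; each statement's English description precedes it below -/
import Mathlib

section
/- Let δ ≥ 3 and α₀ ≥ α₁ ≥ ⋯ ≥ α_r ≥ 0 be integers satisfying δ² − 1 = Σ_{i=0}^r α_i² and 3(δ − 1) = Σ_{i=0}^r α_i. Then δ < 3α₀, i.e. 2α₀ > δ − α₀. -/
/-- For a homaloidal net of degree `δ ≥ 3` with multiplicities
`α₀ ≥ α₁ ≥ ⋯ ≥ α_r ≥ 0` one has `δ < 3α₀`, i.e. `2α₀ > δ − α₀`. -/
theorem stmt_1 (δ : ℤ) (r : ℕ) (α : ℕ → ℤ)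
    (hδ : 3 ≤ δ)
    (hanti : ∀ i j : ℕ, i ≤ j → j ≤ r → α j ≤ α i)
    (hnn : ∀ i : ℕ, i ≤ r → 0 ≤ α i)
    (h1 : δ ^ 2 - 1 = ∑ i ∈ Finset.range (r + 1), (α i) ^ 2)
    (h2 : 3 * (δ - 1) = ∑ i ∈ Finset.range (r + 1), α i) :
    δ < 3 * α 0 ∧ δ - α 0 < 2 * α 0 := by
  have hb : δ ^ 2 - 1 ≤ α 0 * (3 * (δ - 1)) := by
    rw [h1, h2, Finset.mul_sum]
    apply Finset.sum_le_sum
    intro i hi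
    have hi' : i ≤ r := Nat.lt_succ_iff.mp (Finset.mem_range.mp hi)
    have h3 := hanti 0 i (Nat.zero_le _) hi'
    have h4 := hnn i hi'
    nlinarith
  constructor <;> nlinarith
end

section
/- Let δ ≥ 3 and α₀ ≥ α₁ ≥ ⋯ ≥ α_r ≥ 0 be integers satisfying δ² − 1 = Σ_{i=0}^r α_i² and 3(δ − 1) = Σ_{i=0}^r α_i, and set k = δ − α₀. Then 2α₀ − k ≤ Σ_{i ∈ H} (2α_i − k), where H = { i ≥ 1 : 2α_i > k }. In particular H has at least two elements. -/
/-- For a homaloidal net of degree `δ ≥ 3` with multiplicities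
`α₀ ≥ α₁ ≥ ⋯ ≥ α_r ≥ 0`, `α_i ≤ δ − α₀ = k` for `i ≥ 1`, one has
`2α₀ − k ≤ Σ_{i ∈ H} (2α_i − k)` where `H = { 1 ≤ i ≤ r : 2α_i > k }`;
in particular `H` has at least two elements. -/
theorem stmt_2 (δ : ℤ) (r : ℕ) (α : ℕ → ℤ)
    (hδ : 3 ≤ δ)
    (hanti : ∀ i j : ℕ, i ≤ j → j ≤ r → α j ≤ α i)
    (hnn : ∀ i : ℕ, i ≤ r → 0 ≤ α i)
    (h1 : δ ^ 2 - 1 = ∑ i ∈ Finset.range (r + 1), (α i) ^ 2)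
    (h2 : 3 * (δ - 1) = ∑ i ∈ Finset.range (r + 1), α i)
    (hbound : ∀ i : ℕ, 1 ≤ i → i ≤ r → α i ≤ δ - α 0) :
    2 * α 0 - (δ - α 0) ≤
      ∑ i ∈ (Finset.Icc 1 r).filter (fun i => δ - α 0 < 2 * α i),
        (2 * α i - (δ - α 0)) ∧
    2 ≤ ((Finset.Icc 1 r).filter (fun i => δ - α 0 < 2 * α i)).card := by
  have hα0nn : 0 ≤ α 0 := hnn 0 (Nat.zero_le r)
  have hsq : α 0 ^ 2 ≤ δ ^ 2 - 1 := by
    rw [h1]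
    exact Finset.single_le_sum (fun i _ => sq_nonneg (α i)) (by simp)
  have hα0lt : α 0 < δ := by nlinarith
  -- r ≥ 2
  have hr2 : 2 ≤ r := by
    by_contra hr
    push_neg at hr
    have hle : ∀ i ∈ Finset.range (r + 1), α i ≤ α 0 := fun i hi =>
      hanti 0 i (Nat.zero_le i) (by simpa [Nat.lt_succ_iff] using Finset.mem_range.mp hi)
    have hsum := Finset.sum_le_card_nsmul _ _ _ hle
    rw [Finset.card_range, ← h2] at hsum
    have hcast : ((r : ℤ)) ≤ 1 := by exact_mod_cast Nat.lt_succ_iff.mp hr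
    rw [nsmul_eq_mul] at hsum
    push_cast at hsum
    nlinarith
  -- split lemmas
  have hsplit : ∀ f : ℕ → ℤ,
      ∑ i ∈ Finset.range (r + 1), f i = f 0 + ∑ i ∈ Finset.Icc 1 r, f i := by
    intro f
    have he : Finset.range (r + 1) = insert 0 (Finset.Icc 1 r) := by
      ext i; simp only [Finset.mem_range, Finset.mem_insert, Finset.mem_Icc]; omega
    rw [he, Finset.sum_insert (by simp)]
  have hsplit2 : ∀ f : ℕ → ℤ,
      ∑ i ∈ Finset.Icc 1 r, f i = f 1 + ∑ i ∈ Finset.Icc 2 r, f i := by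
    intro f
    have he : Finset.Icc 1 r = insert 1 (Finset.Icc 2 r) := by
      ext i; simp only [Finset.mem_insert, Finset.mem_Icc]; omega
    rw [he, Finset.sum_insert (by simp)]
  set k := δ - α 0 with hk
  have hk1 : 1 ≤ k := by omega
  set H := (Finset.Icc 1 r).filter (fun i => k < 2 * α i) with hH
  -- sums over Icc 1 r
  have hs1 : ∑ i ∈ Finset.Icc 1 r, α i = 3 * (δ - 1) - α 0 := by
    have := hsplit α; linarith [h2, this]
  have hs2 : ∑ i ∈ Finset.Icc 1 r, (α i) ^ 2 = δ ^ 2 - 1 - (α 0) ^ 2 := by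
    have := hsplit (fun i => (α i) ^ 2); linarith [h1, this]
  -- key identity
  have hT : ∑ i ∈ Finset.Icc 1 r, α i * (2 * α i - k)
      = k * (3 * α 0 - δ) + 3 * k - 2 := by
    have e : ∀ i ∈ Finset.Icc 1 r, α i * (2 * α i - k) = 2 * (α i) ^ 2 - k * α i :=
      fun i _ => by ring
    rw [Finset.sum_congr rfl e, Finset.sum_sub_distrib, ← Finset.mul_sum, ← Finset.mul_sum,
      hs1, hs2, hk]
    ring
  -- bound: T ≤ k * S
  have hfilter := Finset.sum_filter_add_sum_filter_not (Finset.Icc 1 r)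
    (fun i => k < 2 * α i) (fun i => α i * (2 * α i - k))
  have hneg : ∑ i ∈ (Finset.Icc 1 r).filter (fun i => ¬ k < 2 * α i),
      α i * (2 * α i - k) ≤ 0 := by
    apply Finset.sum_nonpos
    intro i hi
    simp only [Finset.mem_filter, Finset.mem_Icc, not_lt] at hi
    exact mul_nonpos_of_nonneg_of_nonpos (hnn i hi.1.2) (by linarith [hi.2])
  have hpos : ∑ i ∈ H, α i * (2 * α i - k) ≤ ∑ i ∈ H, k * (2 * α i - k) := by
    apply Finset.sum_le_sum
    intro i hi
    simp only [hH, Finset.mem_filter, Finset.mem_Icc] at hi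
    exact mul_le_mul_of_nonneg_right (hbound i hi.1.1 hi.1.2) (by linarith [hi.2])
  have hkS : k * (3 * α 0 - δ) + 3 * k - 2 ≤ k * ∑ i ∈ H, (2 * α i - k) := by
    calc k * (3 * α 0 - δ) + 3 * k - 2
        = ∑ i ∈ Finset.Icc 1 r, α i * (2 * α i - k) := hT.symm
      _ ≤ ∑ i ∈ H, α i * (2 * α i - k) := by rw [← hfilter]; linarith [hneg]
      _ ≤ k * ∑ i ∈ H, (2 * α i - k) := by rw [Finset.mul_sum]; exact hpos
  have hS : 3 * α 0 - δ + 1 ≤ ∑ i ∈ H, (2 * α i - k) := by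
    have h3 : k * (3 * α 0 - δ + 1) ≤ k * ∑ i ∈ H, (2 * α i - k) := by nlinarith
    exact le_of_mul_le_mul_left h3 (by omega)
  constructor
  · omega
  · -- |H| ≥ 2
    by_contra hc
    push_neg at hc
    interval_cases hcard : H.card
    · -- H empty : Noether contradiction
      have hHe : H = ∅ := Finset.card_eq_zero.mp hcard
      have hS0 : (3 : ℤ) * α 0 - δ + 1 ≤ 0 := by
        rw [hHe] at hS; simpa using hS
      have hout : ∀ i, 1 ≤ i → i ≤ r → 2 * α i ≤ k := by
        intro i hi1 hir
        by_contra hlt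
        push_neg at hlt
        have : i ∈ H := by
          simp only [hH, Finset.mem_filter, Finset.mem_Icc]
          exact ⟨⟨hi1, hir⟩, hlt⟩
        rw [hHe] at this; simp at this
      have h1le : 2 * α 1 ≤ k := hout 1 le_rfl (by omega)
      have h2le : 2 * α 2 ≤ k := hout 2 (by omega) hr2
      -- Noether: δ + 1 ≤ α 0 + α 1 + α 2
      have hN : δ ^ 2 - 1 - α 2 * (3 * (δ - 1)) ≤
          α 0 * (α 0 - α 2) + α 1 * (α 1 - α 2) := by
        have e : ∀ i ∈ Finset.range (r + 1),
            α i * (α i - α 2) = (α i) ^ 2 - α 2 * α i := fun i _ => by ring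
        have hsum : ∑ i ∈ Finset.range (r + 1), α i * (α i - α 2)
            = δ ^ 2 - 1 - α 2 * (3 * (δ - 1)) := by
          rw [Finset.sum_congr rfl e, Finset.sum_sub_distrib, ← Finset.mul_sum, ← h1, ← h2]
        have htail : ∑ i ∈ Finset.Icc 2 r, α i * (α i - α 2) ≤ 0 := by
          apply Finset.sum_nonpos
          intro i hi
          simp only [Finset.mem_Icc] at hi
          exact mul_nonpos_of_nonneg_of_nonpos (hnn i hi.2)
            (by linarith [hanti 2 i hi.1 hi.2])
        have := hsplit (fun i => α i * (α i - α 2))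
        have := hsplit2 (fun i => α i * (α i - α 2))
        linarith
      have hA : α 0 ≤ δ - 1 := by omega
      have h01 : α 1 ≤ α 0 := hanti 0 1 (by omega) (by omega)
      have h12 : α 2 ≤ α 1 := hanti 1 2 (by omega) hr2
      have h2nn : 0 ≤ α 2 := hnn 2 hr2
      nlinarith [mul_nonneg (by linarith : (0:ℤ) ≤ δ - 1 - α 0) (by linarith : (0:ℤ) ≤ α 0 - α 2),
        mul_nonneg (by linarith : (0:ℤ) ≤ δ - 1 - α 1) (by linarith : (0:ℤ) ≤ α 1 - α 2),
        mul_nonneg (by linarith : (0:ℤ) ≤ δ - 1) (by linarith : (0:ℤ) ≤ δ - α 0 - α 1 - α 2)]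
    · -- H = {j}
      obtain ⟨j, hj⟩ := Finset.card_eq_one.mp hcard
      have hjmem : j ∈ H := by rw [hj]; simp
      simp only [hH, Finset.mem_filter, Finset.mem_Icc] at hjmem
      have hSj : ∑ i ∈ H, (2 * α i - k) = 2 * α j - k := by
        rw [hj, Finset.sum_singleton]
      have hja : α j ≤ α 0 := hanti 0 j (Nat.zero_le j) hjmem.1.2
      rw [hSj] at hS
      omega
end

section
/- Let d ≥ 1 and let m₁ ≥ m₂ ≥ m₃ ≥ ⋯ ≥ m_r ≥ 0 be integers with d ≥ m₁ + m₂ + m₃ (set m_i = 0 for i > r). Let δ ≥ 1 and α₁, …, α_r ≥ 0 be integers with δ² − 1 = Σ α_i² (allowing additional α's equal to 0), 3(δ−1) = Σ α_i, and α_i ≤ δ − 1 for all i. Then δd − Σ_{i=1}^r α_i m_i ≥ d. -/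
/-- Numerical form of Jung's theorem: if `d ≥ m₁ + m₂ + m₃` (system of
Noether type) and `(δ; α₁, …, α_r)` satisfies the homaloidal equations with
`α_i ≤ δ − 1`, then `δd − Σ α_i m_i ≥ d`. -/
theorem stmt_12 (d δ : ℤ) (r : ℕ) (m α : ℕ → ℤ)
    (hd : 1 ≤ d)
    (hmanti : ∀ i j : ℕ, 1 ≤ i → i ≤ j → j ≤ r → m j ≤ m i)
    (hmnn : ∀ i : ℕ, 1 ≤ i → i ≤ r → 0 ≤ m i)
    (hmzero : ∀ i : ℕ, r < i → m i = 0)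
    (hNoether : m 1 + m 2 + m 3 ≤ d)
    (hδ : 1 ≤ δ)
    (hαnn : ∀ i : ℕ, 1 ≤ i → i ≤ r → 0 ≤ α i)
    (h1 : δ ^ 2 - 1 = ∑ i ∈ Finset.Icc 1 r, (α i) ^ 2)
    (h2 : 3 * (δ - 1) = ∑ i ∈ Finset.Icc 1 r, α i)
    (hαδ : ∀ i : ℕ, 1 ≤ i → i ≤ r → α i ≤ δ - 1) :
    d ≤ δ * d - ∑ i ∈ Finset.Icc 1 r, α i * m i := by
  have hδ1 : (0:ℤ) ≤ δ - 1 := by linarith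
  have hkey : ∑ i ∈ Finset.Icc 1 r, α i * m i ≤ (δ - 1) * (m 1 + m 2 + m 3) := by
    rcases le_or_gt r 3 with hr | hr
    · have hterm : ∑ i ∈ Finset.Icc 1 r, α i * m i
          ≤ ∑ i ∈ Finset.Icc 1 r, (δ - 1) * m i := by
        apply Finset.sum_le_sum
        intro i hi
        simp only [Finset.mem_Icc] at hi
        exact mul_le_mul_of_nonneg_right (hαδ i hi.1 hi.2) (hmnn i hi.1 hi.2)
      refine hterm.trans ?_
      rw [← Finset.mul_sum]
      have hsum : ∑ i ∈ Finset.Icc 1 r, m i ≤ m 1 + m 2 + m 3 := by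
        interval_cases r
        · simp [hmzero 1 (by norm_num), hmzero 2 (by norm_num), hmzero 3 (by norm_num)]
        · have h2' := hmzero 2 (by norm_num)
          have h3' := hmzero 3 (by norm_num)
          simp [Finset.Icc_self, h2', h3']
        · have h3' := hmzero 3 (by norm_num)
          rw [show Finset.Icc 1 2 = {1, 2} from rfl]
          simp [h3']
        · rw [show Finset.Icc 1 3 = {1, 2, 3} from rfl]
          simp [add_assoc]
      exact mul_le_mul_of_nonneg_left hsum hδ1
    · have h3r : 3 ≤ r := by omega
      have hsplit : ∀ f : ℕ → ℤ, ∑ i ∈ Finset.Icc 1 r, f i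
          = (f 1 + f 2 + f 3) + ∑ i ∈ Finset.Ioc 3 r, f i := by
        intro f
        rw [show Finset.Icc 1 r = Finset.Ioc 0 r from (Finset.Icc_add_one_left_eq_Ioc 0 r).symm ▸ rfl,
          ← Finset.sum_Ioc_consecutive f (Nat.zero_le 3) h3r]
        rw [show Finset.Ioc 0 3 = {1, 2, 3} from rfl]
        simp [add_assoc]
      have hT : ∑ i ∈ Finset.Ioc 3 r, α i * m i
          ≤ (∑ i ∈ Finset.Ioc 3 r, α i) * m 3 := by
        rw [Finset.sum_mul]
        apply Finset.sum_le_sum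
        intro i hi
        simp only [Finset.mem_Ioc] at hi
        exact mul_le_mul_of_nonneg_left
          (hmanti 3 i (by norm_num) (le_of_lt hi.1) hi.2)
          (hαnn i (by omega) hi.2)
      have hαsum : α 1 + α 2 + α 3 + ∑ i ∈ Finset.Ioc 3 r, α i = 3 * (δ - 1) := by
        rw [h2, hsplit α]
      have hm3 : 0 ≤ m 3 := hmnn 3 (by norm_num) h3r
      have hm13 : m 3 ≤ m 1 := hmanti 1 3 (by norm_num) (by norm_num) h3r
      have hm23 : m 3 ≤ m 2 := hmanti 2 3 (by norm_num) (by norm_num) h3r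
      have hα1 := hαδ 1 (by norm_num) (by omega)
      have hα2 := hαδ 2 (by norm_num) (by omega)
      have hα1n := hαnn 1 (by norm_num) (by omega)
      have hα2n := hαnn 2 (by norm_num) (by omega)
      rw [hsplit fun i => α i * m i]
      nlinarith [hT, hαsum, mul_le_mul_of_nonneg_right hα1 (by linarith : (0:ℤ) ≤ m 1 - m 3),
        mul_le_mul_of_nonneg_right hα2 (by linarith : (0:ℤ) ≤ m 2 - m 3)]
  nlinarith [mul_le_mul_of_nonneg_left hNoether hδ1]
end
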